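/- arXiv:1207.6368 — 5 statements merged into one kernel-verified Lean document; each statement's English description precedes it below -/
import Mathlib

section
/- Let S(t) = ∑_{j=1}^k a_j e^{2πi ω_j t} with distinct integer frequencies ω_j and nonzero complex coefficients a_j, let p > 1 be an integer, and h ∈ {0,…,p−1}. Suppose I(S,h;p) = {j₀} is a singleton and ε > 0 satisfies |ω_{j₀}| < 1/(2ε). Then the frequency is exactly recovered by the phase formula: ω_{j₀} = (1/(2πε)) · Arg( Ŝ_{p,ε}[h] / Ŝ_p[h] ), where Arg denotes the principal argument of a complex number. -/
/-- The index set `I(S,h;p)` of frequencies congruent to `h` modulo `p`. -/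
def aliasIdx {k : ℕ} (ω : Fin k → ℤ) (p h : ℕ) : Finset (Fin k) :=
  Finset.univ.filter (fun j => ω j ≡ (h : ℤ) [ZMOD (p : ℤ)])

/-- The signal `S(t) = ∑ j, a j * exp(2πi ω_j t)`. -/
noncomputable def signal {k : ℕ} (a : Fin k → ℂ) (ω : Fin k → ℤ) (t : ℝ) : ℂ :=
  ∑ j, a j * Complex.exp (2 * (Real.pi : ℂ) * Complex.I * (ω j : ℂ) * (t : ℂ))

/-- The shifted sub-sampled DFT `Ŝ_{p,ε}[h]`. -/
noncomputable def sdft {k : ℕ} (a : Fin k → ℂ) (ω : Fin k → ℤ) (p : ℕ) (ε : ℝ) (h : ℕ) : ℂ :=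
  ∑ n ∈ Finset.range p,
    signal a ω ((n : ℝ) / (p : ℝ) + ε) *
      Complex.exp (-(2 * (Real.pi : ℂ) * Complex.I) * (n : ℂ) * (h : ℂ) / (p : ℂ))


/-!
Sampling `S` at `n/p + ε` and taking the `h`-th DFT coefficient sums the geometric series
`∑ₙ e^{2πi n (ω_j - h)/p}`, which is `p` when `ω_j ≡ h (mod p)` and `0` otherwise. Hence
`Ŝ_{p,ε}[h] = p ∑_{j ∈ I(S,h;p)} a_j e^{2πi ω_j ε}`, and when `I(S,h;p) = {j₀}` the ratio
`Ŝ_{p,ε}[h] / Ŝ_p[h]` is `e^{2πi ω_{j₀} ε}`. The bound `|ω_{j₀}| < 1/(2ε)` puts `2π ω_{j₀} ε`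
in `(-π, π]`, where the principal argument inverts `θ ↦ e^{iθ}`.
-/

open Complex Finset
open scoped Real

theorem geom_sum_exp_two_pi_I_int_div {p : ℕ} (hp : p ≠ 0) (m : ℤ) :
    ∑ n ∈ range p, exp (2 * π * I * m / p) ^ n = if (p : ℤ) ∣ m then (p : ℂ) else 0 := by
  have hp0 : (p : ℂ) ≠ 0 := Nat.cast_ne_zero.2 hp
  split_ifs with hdvd
  · obtain ⟨q, rfl⟩ := hdvd
    have hζ : exp (2 * π * I * ((p * q : ℤ) : ℂ) / p) = 1 := by
      rw [show 2 * π * I * ((p * q : ℤ) : ℂ) / p = q * (2 * π * I) by push_cast; field_simp,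
        exp_int_mul_two_pi_mul_I]
    rw [hζ]
    simp
  · have hζ : exp (2 * π * I * m / p) ≠ 1 := by
      rw [Ne, exp_eq_one_iff]
      rintro ⟨n, hn⟩
      refine hdvd ⟨n, ?_⟩
      have hπI : 2 * (π : ℂ) * I ≠ 0 := by simp [Real.pi_ne_zero]
      rw [div_eq_iff hp0] at hn
      have hm : (m : ℂ) = p * n := mul_left_cancel₀ hπI (by linear_combination hn)
      exact_mod_cast hm
    have hζp : exp (2 * π * I * m / p) ^ p = 1 := by
      rw [← exp_nat_mul, show (p : ℂ) * (2 * π * I * m / p) = m * (2 * π * I) by field_simp,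
        exp_int_mul_two_pi_mul_I]
    rw [geom_sum_eq hζ, hζp, sub_self, zero_div]

theorem sdft_eq_sum_aliasIdx {k : ℕ} (a : Fin k → ℂ) (ω : Fin k → ℤ) {p : ℕ} (hp : p ≠ 0)
    (ε : ℝ) (h : ℕ) :
    sdft a ω p ε h = p * ∑ j ∈ aliasIdx ω p h, a j * exp (2 * π * I * ω j * ε) := by
  have hterm : ∀ j, ∑ n ∈ range p, a j * exp (2 * π * I * ω j * (((n : ℝ) / p + ε : ℝ) : ℂ)) *
      exp (-(2 * π * I) * n * h / p)
      = a j * exp (2 * π * I * ω j * ε) *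
          ∑ n ∈ range p, exp (2 * π * I * ((ω j - h : ℤ) : ℂ) / p) ^ n := by
    intro j
    rw [mul_sum]
    refine sum_congr rfl fun n _ => ?_
    rw [← exp_nat_mul]
    simp only [mul_assoc, ← exp_add]
    congr 2
    push_cast
    ring
  unfold sdft signal
  simp only [sum_mul]
  rw [sum_comm, mul_sum, aliasIdx, sum_filter]
  refine sum_congr rfl fun j _ => ?_
  rw [hterm, geom_sum_exp_two_pi_I_int_div hp,
    if_congr (Int.modEq_iff_dvd.symm.trans Int.modEq_comm) rfl rfl]
  split_ifs <;> ring

theorem sdft_div_sdft_zero_of_aliasIdx_eq_singleton {k : ℕ} {a : Fin k → ℂ} {ω : Fin k → ℤ}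
    {p : ℕ} (hp : p ≠ 0) {h : ℕ} {j₀ : Fin k} (hsingle : aliasIdx ω p h = {j₀})
    (ha : a j₀ ≠ 0) (ε : ℝ) :
    sdft a ω p ε h / sdft a ω p 0 h = exp (2 * π * I * ω j₀ * ε) := by
  simp only [sdft_eq_sum_aliasIdx a ω hp, hsingle, sum_singleton, ofReal_zero, mul_zero,
    exp_zero, mul_one]
  rw [← mul_assoc]
  exact mul_div_cancel_left₀ _ (mul_ne_zero (Nat.cast_ne_zero.2 hp) ha)

theorem two_pi_mul_mul_mem_Ioc_of_abs_lt {x ε : ℝ} (hε : 0 < ε) (hx : |x| < 1 / (2 * ε)) :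
    2 * π * x * ε ∈ Set.Ioc (-π) π := by
  have hxε : |x| * (2 * ε) < 1 := (lt_div_iff₀ (by positivity)).1 hx
  have hlt : |2 * π * x * ε| < π := by
    rw [show 2 * π * x * ε = π * (x * (2 * ε)) by ring, abs_mul, abs_of_pos Real.pi_pos,
      abs_mul, abs_of_pos (by positivity : 0 < 2 * ε)]
    exact mul_lt_of_lt_one_right Real.pi_pos hxε
  exact ⟨(abs_lt.1 hlt).1, (abs_lt.1 hlt).2.le⟩

theorem stmt2_general {k : ℕ} (a : Fin k → ℂ) (ω : Fin k → ℤ)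
    (ha : ∀ j, a j ≠ 0) (p : ℕ) (hp : 1 < p) (h : ℕ)
    (j₀ : Fin k) (hsingle : aliasIdx ω p h = {j₀})
    (ε : ℝ) (hε : 0 < ε) (hfreq : |(ω j₀ : ℝ)| < 1 / (2 * ε)) :
    (ω j₀ : ℝ) =
      (1 / (2 * Real.pi * ε)) * Complex.arg (sdft a ω p ε h / sdft a ω p 0 h) := by
  have hθ := two_pi_mul_mul_mem_Ioc_of_abs_lt hε hfreq
  rw [sdft_div_sdft_zero_of_aliasIdx_eq_singleton (by omega) hsingle (ha j₀),
    show 2 * π * I * ω j₀ * ε = ((2 * π * ω j₀ * ε : ℝ) : ℂ) * I by push_cast; ring,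
    exp_mul_I, arg_cos_add_sin_mul_I hθ]
  field_simp

theorem stmt2 {k : ℕ} (a : Fin k → ℂ) (ω : Fin k → ℤ) (hω : Function.Injective ω)
    (ha : ∀ j, a j ≠ 0) (p : ℕ) (hp : 1 < p) (h : ℕ) (hh : h < p)
    (j₀ : Fin k) (hsingle : aliasIdx ω p h = {j₀})
    (ε : ℝ) (hε : 0 < ε) (hfreq : |(ω j₀ : ℝ)| < 1 / (2 * ε)) :
    (ω j₀ : ℝ) =
      (1 / (2 * Real.pi * ε)) * Complex.arg (sdft a ω p ε h / sdft a ω p 0 h) :=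
  stmt2_general a ω ha p hp h j₀ hsingle ε hε hfreq
end

section
/- (Lemma 1, part A.) Let S(t) = ∑_{j=1}^k a_j e^{2πi ω_j t} with distinct integer frequencies ω_j and nonzero complex coefficients a_j, let p > 1 be an integer and h ∈ {0,…,p−1}, and suppose q := |I(S,h;p)| > 1 (i.e., more than one frequency is congruent to h modulo p). Let ε > 0 and let E = {ω_j − ω_l : j, l ∈ I(S,h;p)} be the set of pairwise differences of the aliased frequencies. If all the numbers εα for α ∈ E are pairwise distinct modulo 1 (i.e., for α ≠ β in E, ε(α − β) is not an integer), then there exists an integer m with 1 ≤ m ≤ q² − q such that |Ŝ_{p,mε}[h]| ≠ |Ŝ_p[h]|. -/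
/-!
Only the aliased frequencies survive the sub-sampled DFT, so `Ŝ_{p,t}[h] = p F(t)` with
`F(t) = ∑_{j ∈ I} a_j e(ω_j t)`. Expanding, `|F(t)|² = ∑_{α ∈ E} c_α e(α t)` is an exponential sum
over the difference set `E`, which contains `0` and has at most `q² - q + 1` elements. If
`|F(mε)| = |F(0)|` for `m = 0, …, q² - q`, then the coefficients `c_α - [α = 0] |F(0)|²` are
annihilated by a Vandermonde system with the distinct nodes `e(αε)`, so they all vanish. But the
largest difference `max ω - min ω` is attained by a single pair `(j₁, j₂)`, so its coefficient is
`a_{j₁} conj(a_{j₂}) ≠ 0`.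
-/

open Finset Complex Real ComplexConjugate

theorem eq_zero_of_sum_mul_pow_eq_zero {ι K : Type*} [Field K] [DecidableEq ι] {s : Finset ι}
    {w c : ι → K} (hw : Set.InjOn w s) (h : ∀ m < #s, ∑ i ∈ s, c i * w i ^ m = 0)
    {i : ι} (hi : i ∈ s) : c i = 0 := by
  have hP : (Lagrange.basis s w i).natDegree < #s := by
    rw [Lagrange.natDegree_basis hw hi]
    have := card_pos.mpr ⟨i, hi⟩
    omega
  calc c i = ∑ j ∈ s, c j * (Lagrange.basis s w i).eval (w j) := by
        rw [sum_eq_single_of_mem i hi fun j hj hji => by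
            rw [Lagrange.eval_basis_of_ne hji.symm hj, mul_zero],
          Lagrange.eval_basis_self hw hi, mul_one]
    _ = ∑ m ∈ range #s, (Lagrange.basis s w i).coeff m * ∑ j ∈ s, c j * w j ^ m := by
        simp only [Polynomial.eval_eq_sum_range' hP, mul_sum]
        rw [sum_comm]
        exact sum_congr rfl fun _ _ => sum_congr rfl fun _ _ => by ring
    _ = 0 := sum_eq_zero fun m hm => by rw [h m (mem_range.mp hm), mul_zero]

theorem eq_zero_of_sum_mul_pow_eq_const {ι K : Type*} [Field K] [DecidableEq ι] {s : Finset ι}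
    {w c : ι → K} {C : K} (hw : Set.InjOn w s) {i₀ : ι} (hi₀ : i₀ ∈ s) (hw₀ : w i₀ = 1)
    (h : ∀ m < #s, ∑ i ∈ s, c i * w i ^ m = C) {i : ι} (hi : i ∈ s) (hne : i ≠ i₀) : c i = 0 := by
  have hc := eq_zero_of_sum_mul_pow_eq_zero (c := c - Pi.single i₀ C) hw (fun m hm => by
    simp only [Pi.sub_apply, sub_mul, sum_sub_distrib, h m hm]
    rw [sum_eq_single_of_mem i₀ hi₀ fun j _ hj => by rw [Pi.single_eq_of_ne hj, zero_mul],
      Pi.single_eq_same, hw₀, one_pow, mul_one, sub_self]) hi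
  simpa [Pi.single_eq_of_ne hne] using hc

section TrigSum

variable {ι : Type*} (s : Finset ι) (a : ι → ℂ) (ω : ι → ℤ)

noncomputable def trigSum (t : ℝ) : ℂ :=
  ∑ j ∈ s, a j * exp (2 * π * I * ω j * t)

def diffSet : Finset ℤ :=
  (s ×ˢ s).image fun jl => ω jl.1 - ω jl.2

noncomputable def diffCoeff (α : ℤ) : ℂ :=
  ∑ jl ∈ s ×ˢ s with ω jl.1 - ω jl.2 = α, a jl.1 * conj (a jl.2)

theorem sq_norm_trigSum (t : ℝ) :
    (‖trigSum s a ω t‖ : ℂ) ^ 2 =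
      ∑ α ∈ diffSet s ω, diffCoeff s a ω α * exp (2 * π * I * α * t) := by
  calc (‖trigSum s a ω t‖ : ℂ) ^ 2
      = ∑ jl ∈ s ×ˢ s, a jl.1 * conj (a jl.2) * exp (2 * π * I * ↑(ω jl.1 - ω jl.2) * t) := by
        rw [← mul_conj', trigSum, map_sum, sum_mul_sum, ← sum_product']
        refine sum_congr rfl fun jl _ => ?_
        simp only [map_mul, ← exp_conj, map_ofNat, conj_ofReal, conj_I, map_intCast]
        rw [mul_mul_mul_comm, ← Complex.exp_add]
        push_cast
        ring_nf
    _ = _ := by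
        rw [diffSet, sum_image']
        intro jl _
        rw [diffCoeff, sum_mul]
        exact sum_congr rfl fun il hil => by rw [(mem_filter.mp hil).2]

theorem card_diffSet_le [DecidableEq ι] : #(diffSet s ω) ≤ #s ^ 2 - #s + 1 := by
  have hsub : diffSet s ω ⊆ insert 0 (s.offDiag.image fun jl => ω jl.1 - ω jl.2) := by
    intro α hα
    obtain ⟨⟨j, l⟩, hjl, rfl⟩ := mem_image.mp hα
    obtain ⟨hj, hl⟩ := mem_product.mp hjl
    by_cases hjl : j = l
    · simp [hjl]
    · exact mem_insert_of_mem (mem_image_of_mem _ (mem_offDiag.mpr ⟨hj, hl, hjl⟩))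
  calc #(diffSet s ω) ≤ #(s.offDiag.image fun jl => ω jl.1 - ω jl.2) + 1 :=
        (card_le_card hsub).trans (card_insert_le _ _)
    _ ≤ #s ^ 2 - #s + 1 := by
        rw [sq, ← offDiag_card]
        exact Nat.add_le_add_right card_image_le 1

theorem zero_mem_diffSet {s : Finset ι} (hs : s.Nonempty) : 0 ∈ diffSet s ω := by
  obtain ⟨j, hj⟩ := hs
  exact mem_image.mpr ⟨(j, j), mem_product.mpr ⟨hj, hj⟩, sub_self _⟩

theorem exists_diffCoeff_ne_zero {s : Finset ι} {a : ι → ℂ} {ω : ι → ℤ} (hs : 1 < #s)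
    (hω : Set.InjOn ω s) (ha : ∀ j ∈ s, a j ≠ 0) :
    ∃ α ∈ diffSet s ω, α ≠ 0 ∧ diffCoeff s a ω α ≠ 0 := by
  obtain ⟨x, hx, y, hy, hxy⟩ := one_lt_card.mp hs
  obtain ⟨j₁, hj₁, hmax⟩ := exists_max_image s ω ⟨x, hx⟩
  obtain ⟨j₂, hj₂, hmin⟩ := exists_min_image s ω ⟨x, hx⟩
  have hfiber : {jl ∈ s ×ˢ s | ω jl.1 - ω jl.2 = ω j₁ - ω j₂} = {(j₁, j₂)} := by
    refine eq_singleton_iff_unique_mem.mpr ⟨by simp [hj₁, hj₂], ?_⟩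
    rintro ⟨j, l⟩ hjl
    obtain ⟨hjl, hdiff : ω j - ω l = ω j₁ - ω j₂⟩ := mem_filter.mp hjl
    obtain ⟨hj, hl⟩ : j ∈ s ∧ l ∈ s := mem_product.mp hjl
    have := hmax j hj
    have := hmin l hl
    rw [hω hj hj₁ (by omega), hω hl hj₂ (by omega)]
  refine ⟨ω j₁ - ω j₂, mem_image.mpr ⟨(j₁, j₂), mem_product.mpr ⟨hj₁, hj₂⟩, rfl⟩, ?_, ?_⟩
  · have := hω.ne hx hy hxy
    have := hmax x hx; have := hmax y hy; have := hmin x hx; have := hmin y hy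
    omega
  · rw [diffCoeff, hfiber, sum_singleton]
    exact mul_ne_zero (ha j₁ hj₁) ((map_ne_zero _).mpr (ha j₂ hj₂))

end TrigSum

theorem exists_norm_trigSum_ne {ι : Type*} [DecidableEq ι] {s : Finset ι} {a : ι → ℂ}
    {ω : ι → ℤ} (hs : 1 < #s) (hω : Set.InjOn ω s) (ha : ∀ j ∈ s, a j ≠ 0) {ε : ℝ}
    (hε : Set.InjOn (fun α : ℤ => exp (2 * π * I * α * ε)) (diffSet s ω)) :
    ∃ m : ℕ, 1 ≤ m ∧ m ≤ #s ^ 2 - #s ∧ ‖trigSum s a ω (m * ε)‖ ≠ ‖trigSum s a ω 0‖ := by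
  by_contra! hconst
  obtain ⟨α, hα, hα0, hcα⟩ := exists_diffCoeff_ne_zero hs hω ha
  refine hcα (eq_zero_of_sum_mul_pow_eq_const (C := (‖trigSum s a ω 0‖ : ℂ) ^ 2) hε
    (zero_mem_diffSet ω (card_pos.mp (by omega))) (by simp) (fun m hm => ?_) hα hα0)
  have hmN : m ≤ #s ^ 2 - #s := by have := card_diffSet_le s ω; omega
  have hnorm : ‖trigSum s a ω (m * ε)‖ = ‖trigSum s a ω 0‖ := by
    rcases Nat.eq_zero_or_pos m with rfl | hm0
    · simp
    · exact hconst m hm0 hmN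
  simp only [← Complex.exp_nat_mul]
  rw [← hnorm, sq_norm_trigSum]
  exact sum_congr rfl fun β _ => by push_cast; ring_nf

theorem injOn_exp_of_forall_not_int {E : Set ℤ} {ε : ℝ}
    (hE : ∀ α ∈ E, ∀ β ∈ E, α ≠ β → ¬ ∃ n : ℤ, ε * ((α : ℝ) - (β : ℝ)) = (n : ℝ)) :
    Set.InjOn (fun α : ℤ => exp (2 * π * I * α * ε)) E := by
  intro α hα β hβ hαβ
  by_contra hne
  obtain ⟨n, hn⟩ := exp_eq_exp_iff_exists_int.mp hαβ
  refine hE α hα β hβ hne ⟨n, ?_⟩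
  have h2πI : 2 * π * I ≠ 0 := by simp [Real.pi_ne_zero, I_ne_zero]
  have : (2 * π * I) * ((ε * (α - β) : ℝ) : ℂ) = (2 * π * I) * (n : ℝ) := by
    push_cast; linear_combination hn
  exact_mod_cast mul_left_cancel₀ h2πI this

theorem sum_range_exp_mul_div (p : ℕ) (hp : p ≠ 0) (d : ℤ) :
    ∑ n ∈ range p, exp (2 * π * I * d * n / p) = if (p : ℤ) ∣ d then (p : ℂ) else 0 := by
  have hζ := isPrimitiveRoot_exp p hp
  have hterm : ∀ n : ℕ, exp (2 * π * I * d * n / p) = (exp (2 * π * I / p) ^ d) ^ n := by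
    intro n
    rw [← exp_int_mul, ← Complex.exp_nat_mul]
    ring_nf
  simp only [hterm]
  split_ifs with hd
  · simp [(hζ.zpow_eq_one_iff_dvd d).mpr hd]
  · have hz : (exp (2 * π * I / p) ^ d) ^ p = 1 := by
      rw [← zpow_natCast, ← zpow_mul, hζ.zpow_eq_one_iff_dvd]
      exact dvd_mul_left _ _
    rw [geom_sum_eq (mt (hζ.zpow_eq_one_iff_dvd d).mp hd), hz, sub_self, zero_div]

theorem sdft_eq_mul_trigSum {k : ℕ} (a : Fin k → ℂ) (ω : Fin k → ℤ) {p : ℕ} (hp : p ≠ 0)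
    (h : ℕ) (t : ℝ) : sdft a ω p t h = p * trigSum (aliasIdx ω p h) a ω t := by
  have hmem : ∀ j, j ∈ aliasIdx ω p h ↔ (p : ℤ) ∣ ω j - h := fun j => by
    simpa only [aliasIdx, mem_filter, mem_univ, true_and] using
      Int.modEq_comm.trans Int.modEq_iff_dvd
  have hterm : ∀ j, ∑ n ∈ range p, a j * exp (2 * π * I * ω j * ((n / p + t : ℝ) : ℂ)) *
      exp (-(2 * π * I) * n * h / p) =
      a j * exp (2 * π * I * ω j * t) * ∑ n ∈ range p, exp (2 * π * I * ↑(ω j - h) * n / p) := by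
    intro j
    rw [mul_sum]
    refine sum_congr rfl fun n _ => ?_
    simp only [mul_assoc (a j), ← Complex.exp_add]
    congr 2
    push_cast
    field_simp
    ring
  simp only [sdft, signal, trigSum, sum_mul]
  rw [sum_comm]
  simp only [hterm, sum_range_exp_mul_div p hp, ← hmem, mul_ite, mul_zero, sum_ite_mem, univ_inter,
    mul_sum]
  exact sum_congr rfl fun j _ => mul_comm _ _

theorem stmt4_general {k : ℕ} (a : Fin k → ℂ) (ω : Fin k → ℤ) (hω : Function.Injective ω)
    (ha : ∀ j, a j ≠ 0) (p : ℕ) (hp : 1 < p) (h : ℕ)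
    (hq : 1 < (aliasIdx ω p h).card) (ε : ℝ)
    (hdistinct : ∀ α ∈ ((aliasIdx ω p h) ×ˢ (aliasIdx ω p h)).image
        (fun jl : Fin k × Fin k => ω jl.1 - ω jl.2),
      ∀ β ∈ ((aliasIdx ω p h) ×ˢ (aliasIdx ω p h)).image
        (fun jl : Fin k × Fin k => ω jl.1 - ω jl.2),
      α ≠ β → ¬ ∃ n : ℤ, ε * ((α : ℝ) - (β : ℝ)) = (n : ℝ)) :
    ∃ m : ℕ, 1 ≤ m ∧ m ≤ (aliasIdx ω p h).card ^ 2 - (aliasIdx ω p h).card ∧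
      ‖sdft a ω p ((m : ℝ) * ε) h‖ ≠ ‖sdft a ω p 0 h‖ := by
  obtain ⟨m, hm1, hmN, hne⟩ := exists_norm_trigSum_ne hq hω.injOn (fun j _ => ha j)
    (injOn_exp_of_forall_not_int hdistinct)
  refine ⟨m, hm1, hmN, ?_⟩
  have hp0 : p ≠ 0 := by omega
  rw [sdft_eq_mul_trigSum a ω hp0, sdft_eq_mul_trigSum a ω hp0, norm_mul, norm_mul]
  exact fun heq => hne (mul_left_cancel₀ (by simpa using hp0) heq)

theorem stmt4 {k : ℕ} (a : Fin k → ℂ) (ω : Fin k → ℤ) (hω : Function.Injective ω)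
    (ha : ∀ j, a j ≠ 0) (p : ℕ) (hp : 1 < p) (h : ℕ) (hh : h < p)
    (hq : 1 < (aliasIdx ω p h).card) (ε : ℝ) (hε : 0 < ε)
    (hdistinct : ∀ α ∈ ((aliasIdx ω p h) ×ˢ (aliasIdx ω p h)).image
        (fun jl : Fin k × Fin k => ω jl.1 - ω jl.2),
      ∀ β ∈ ((aliasIdx ω p h) ×ˢ (aliasIdx ω p h)).image
        (fun jl : Fin k × Fin k => ω jl.1 - ω jl.2),
      α ≠ β → ¬ ∃ n : ℤ, ε * ((α : ℝ) - (β : ℝ)) = (n : ℝ)) :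
    ∃ m : ℕ, 1 ≤ m ∧ m ≤ (aliasIdx ω p h).card ^ 2 - (aliasIdx ω p h).card ∧
      ‖sdft a ω p ((m : ℝ) * ε) h‖ ≠ ‖sdft a ω p 0 h‖ :=
  stmt4_general a ω hω ha p hp h hq ε hdistinct
end

section
/- (Lemma 1, part B.) Let S(t) = ∑_{j=1}^k a_j e^{2πi ω_j t} with distinct integer frequencies ω_j and nonzero complex coefficients a_j, let p > 1 be an integer and h ∈ {0,…,p−1}, and suppose |I(S,h;p)| > 1 (i.e., more than one frequency is congruent to h modulo p). Then the set of ε ∈ [0,1) for which |Ŝ_{p,ε}[h]| = |Ŝ_p[h]| is finite; equivalently, for all but finitely many ε ∈ [0,1), |Ŝ_{p,ε}[h]| ≠ |Ŝ_p[h]|. -/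
/-!
Only the frequencies in `aliasIdx ω p h` survive the sum over `n`, so with `z = e^{2πiε}` and `m`
a lower bound of those frequencies, `Ŝ_{p,ε}[h] = p z^m P(z)` for a polynomial `P` with at least
two nonzero coefficients. On the unit circle `conj z = z⁻¹`, so `|P(z)| = c` says that `z` is a root
of `P Q - c² X^D`, where `D = deg P` and `Q` is the conjugate of the reverse of `P`. As `P Q` has
degree `2D - t > D` (`t` the trailing degree of `P`), this polynomial is nonzero and has finitely
many roots, and `ε ↦ e^{2πiε}` is injective on `[0, 1)`.
-/

open Polynomial ComplexConjugate Complex Finset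
open scoped Real

namespace Polynomial

theorem natTrailingDegree_lt_natDegree_of_coeff_ne_zero {R : Type*} [Semiring R] {P : R[X]}
    {i j : ℕ} (hij : i ≠ j) (hi : P.coeff i ≠ 0) (hj : P.coeff j ≠ 0) :
    P.natTrailingDegree < P.natDegree := by
  rcases hij.lt_or_gt with h | h
  · exact (natTrailingDegree_le_of_ne_zero hi).trans_lt (h.trans_le (le_natDegree_of_ne_zero hj))
  · exact (natTrailingDegree_le_of_ne_zero hj).trans_lt (h.trans_le (le_natDegree_of_ne_zero hi))

theorem coeff_sum_monomial_of_injOn {ι R : Type*} [Semiring R] {s : Finset ι} {n : ι → ℕ}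
    (hn : Set.InjOn n s) (c : ι → R) {i : ι} (hi : i ∈ s) :
    (∑ j ∈ s, monomial (n j) (c j)).coeff (n i) = c i := by
  rw [finsetSum_coeff, sum_eq_single_of_mem i hi fun j hj hji => ?_, coeff_monomial_same]
  exact coeff_monomial_of_ne _ (hn.ne hi hj hji.symm)

theorem sum_mul_zpow_eq_zpow_mul_eval {ι K : Type*} [Field K] (s : Finset ι) (c : ι → K)
    {ν : ι → ℤ} {m : ℤ} (hm : ∀ j ∈ s, m ≤ ν j) {z : K} (hz : z ≠ 0) :
    ∑ j ∈ s, c j * z ^ ν j = z ^ m * (∑ j ∈ s, monomial (ν j - m).toNat (c j)).eval z := by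
  rw [eval_finsetSum, mul_sum]
  refine sum_congr rfl fun j hj => ?_
  rw [eval_monomial, ← zpow_natCast, Int.toNat_of_nonneg (sub_nonneg.mpr (hm j hj)),
    mul_left_comm, ← zpow_add₀ hz, add_sub_cancel]

theorem eval_map_conj_reverse_mul_conj_pow {P : ℂ[X]} {z : ℂ} (hz : ‖z‖ = 1) :
    (P.reverse.map conj).eval z * conj z ^ P.natDegree = conj (P.eval z) := by
  have hz0 : conj z ≠ 0 := by simp [← norm_pos_iff, hz]
  let := invertibleOfNonzero hz0
  have := eval₂_reverse_mul_pow conj (conj z) P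
  rw [invOf_eq_inv, ← inv_eq_conj hz, inv_inv, inv_eq_conj hz] at this
  rw [eval_map, this, eval, hom_eval₂]
  rfl

theorem finite_setOf_norm_eval_eq {P : ℂ[X]} (hP : P.natTrailingDegree < P.natDegree) (c : ℝ) :
    {z : ℂ | ‖z‖ = 1 ∧ ‖P.eval z‖ = c}.Finite := by
  have hP0 : P ≠ 0 := by rintro rfl; simp at hP
  set D := P.natDegree
  set Q := P.reverse.map conj
  have hQ0 : Q ≠ 0 := by simpa [Q] using hP0
  have hPQ : (P * Q).natDegree = D + (D - P.natTrailingDegree) := by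
    rw [natDegree_mul hP0 hQ0, natDegree_map, reverse_natDegree]
  have hR : P * Q - C ((c : ℂ) ^ 2) * X ^ D ≠ 0 := by
    intro h0
    have := natDegree_sub_eq_left_of_natDegree_lt (p := P * Q) (q := C ((c : ℂ) ^ 2) * X ^ D)
      (by rw [hPQ]; exact (natDegree_C_mul_X_pow_le _ _).trans_lt (by omega))
    rw [h0, natDegree_zero, hPQ] at this
    omega
  refine (finite_setOfPred_isRoot hR).subset fun z ⟨hz, hPz⟩ => ?_
  have hzD : conj z ^ D * z ^ D = 1 := by
    rw [← mul_pow, mul_comm, mul_conj, normSq_eq_norm_sq, hz]; simp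
  have hPz2 : P.eval z * conj (P.eval z) = (c : ℂ) ^ 2 := by
    rw [mul_conj, normSq_eq_norm_sq, hPz]; simp
  simp only [Set.mem_ofPred_eq, IsRoot, eval_sub, eval_mul, eval_C, eval_pow, eval_X]
  rw [← hPz2, ← eval_map_conj_reverse_mul_conj_pow hz]
  linear_combination (-(P.eval z * Q.eval z)) * hzD

end Polynomial

theorem sum_range_exp_two_pi_I_mul_div {p : ℕ} (hp : p ≠ 0) (m : ℤ) :
    ∑ n ∈ range p, cexp (2 * π * I * m * n / p) = if (p : ℤ) ∣ m then (p : ℂ) else 0 := by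
  set ζ := cexp (2 * π * I / p)
  have hζ : IsPrimitiveRoot ζ p := isPrimitiveRoot_exp p hp
  have hterm : ∀ n : ℕ, cexp (2 * π * I * m * n / p) = (ζ ^ m) ^ n := fun n => by
    rw [← zpow_natCast, ← zpow_mul, ← exp_int_mul]
    push_cast
    ring_nf
  simp only [hterm]
  split_ifs with hd
  · simp [(hζ.zpow_eq_one_iff_dvd m).mpr hd]
  · rw [geom_sum_eq (mt (hζ.zpow_eq_one_iff_dvd m).mp hd), ← zpow_natCast, ← zpow_mul, mul_comm,
      zpow_mul, zpow_natCast, hζ.pow_eq_one, one_zpow, sub_self, zero_div]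

theorem injOn_exp_two_pi_I_mul_Ico :
    Set.InjOn (fun t : ℝ => cexp (2 * π * I * t)) (Set.Ico 0 1) := by
  intro s hs t ht hst
  obtain ⟨n, hn⟩ := exp_eq_exp_iff_exists_int.mp hst
  have h2πI : (2 * π * I : ℂ) ≠ 0 := by simp [Real.pi_ne_zero]
  have hst' : s = t + n := by
    have : (s : ℂ) = t + n := mul_left_cancel₀ h2πI (by linear_combination hn)
    exact_mod_cast this
  have hn0 : n = 0 := Int.abs_lt_one_iff.mp <| by
    have : |(n : ℝ)| < 1 := abs_lt.mpr ⟨by linarith [hs.1, ht.2], by linarith [hs.2, ht.1]⟩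
    exact_mod_cast this
  simp [hst', hn0]

theorem norm_exp_two_pi_I_mul (t : ℝ) : ‖cexp (2 * π * I * t)‖ = 1 := by
  rw [← norm_exp_ofReal_mul_I (2 * π * t)]
  push_cast
  ring_nf

theorem exp_two_pi_I_mul_int_mul (n : ℤ) (t : ℝ) :
    cexp (2 * π * I * n * t) = cexp (2 * π * I * t) ^ n := by
  rw [← exp_int_mul]
  ring_nf

theorem mem_aliasIdx_iff {k : ℕ} {ω : Fin k → ℤ} {p h : ℕ} {j : Fin k} :
    j ∈ aliasIdx ω p h ↔ (p : ℤ) ∣ ω j - h := by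
  rw [aliasIdx, mem_filter, Int.modEq_comm, Int.modEq_iff_dvd]
  simp

theorem sdft_eq_mul_sum_aliasIdx {k : ℕ} (a : Fin k → ℂ) (ω : Fin k → ℤ) {p : ℕ} (hp : p ≠ 0)
    (ε : ℝ) (h : ℕ) :
    sdft a ω p ε h = p * ∑ j ∈ aliasIdx ω p h, a j * cexp (2 * π * I * ε) ^ ω j := by
  calc sdft a ω p ε h
      = ∑ j, a j * cexp (2 * π * I * ω j * ε) *
          ∑ n ∈ range p, cexp (2 * π * I * (ω j - h : ℤ) * n / p) := by
        simp only [sdft, signal, sum_mul, mul_sum]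
        rw [sum_comm]
        refine sum_congr rfl fun j _ => sum_congr rfl fun n _ => ?_
        rw [mul_assoc, mul_assoc (a j), ← exp_add, ← exp_add]
        congr 2
        push_cast
        field_simp
        ring
    _ = ∑ j, if j ∈ aliasIdx ω p h then p * (a j * cexp (2 * π * I * ε) ^ ω j) else 0 := by
        refine sum_congr rfl fun j _ => ?_
        simp only [sum_range_exp_two_pi_I_mul_div hp, mem_aliasIdx_iff, exp_two_pi_I_mul_int_mul]
        split_ifs <;> ring
    _ = _ := by rw [sum_ite_mem, univ_inter, mul_sum]

theorem stmt5_general {k : ℕ} (a : Fin k → ℂ) (ω : Fin k → ℤ) (hω : Function.Injective ω)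
    (ha : ∀ j, a j ≠ 0) (p : ℕ) (hp : 1 < p) (h : ℕ)
    (hq : 1 < (aliasIdx ω p h).card) :
    {ε ∈ Set.Ico (0 : ℝ) 1 |
      ‖sdft a ω p ε h‖ = ‖sdft a ω p 0 h‖}.Finite := by
  have hp0 : p ≠ 0 := by omega
  set J := aliasIdx ω p h
  obtain ⟨m, hm⟩ : ∃ m, ∀ j ∈ J, m ≤ ω j :=
    (J.image ω).bddBelow.imp fun _ hm j hj => hm (mem_image_of_mem ω hj)
  set P : ℂ[X] := ∑ j ∈ J, monomial (ω j - m).toNat (a j)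
  have hnorm (ε : ℝ) : ‖sdft a ω p ε h‖ = p * ‖P.eval (cexp (2 * π * I * ε))‖ := by
    rw [sdft_eq_mul_sum_aliasIdx a ω hp0, sum_mul_zpow_eq_zpow_mul_eval _ _ hm (exp_ne_zero _),
      norm_mul, norm_natCast, norm_mul, norm_zpow, norm_exp_two_pi_I_mul, one_zpow, one_mul]
  have hP : P.natTrailingDegree < P.natDegree := by
    obtain ⟨u, hu, v, hv, huv⟩ := one_lt_card.mp hq
    have hinj : Set.InjOn (fun j => (ω j - m).toNat) J := fun i hi j hj hij => by
      have := hm i hi; have := hm j hj; simp only at hij; exact hω (by omega)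
    exact natTrailingDegree_lt_natDegree_of_coeff_ne_zero (hinj.ne hu hv huv)
      (by rw [coeff_sum_monomial_of_injOn hinj _ hu]; exact ha u)
      (by rw [coeff_sum_monomial_of_injOn hinj _ hv]; exact ha v)
  refine Set.Finite.of_finite_image
    ((finite_setOf_norm_eval_eq hP (‖sdft a ω p 0 h‖ / p)).subset ?_)
    (injOn_exp_two_pi_I_mul_Ico.mono fun ε hε => hε.1)
  rintro _ ⟨ε, ⟨-, heq⟩, rfl⟩
  refine ⟨norm_exp_two_pi_I_mul ε, ?_⟩
  rw [eq_div_iff (by positivity), mul_comm, ← hnorm, heq]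

theorem stmt5 {k : ℕ} (a : Fin k → ℂ) (ω : Fin k → ℤ) (hω : Function.Injective ω)
    (ha : ∀ j, a j ≠ 0) (p : ℕ) (hp : 1 < p) (h : ℕ) (hh : h < p)
    (hq : 1 < (aliasIdx ω p h).card) :
    {ε ∈ Set.Ico (0 : ℝ) 1 |
      ‖sdft a ω p ε h‖ = ‖sdft a ω p 0 h‖}.Finite :=
  stmt5_general a ω hω ha p hp h hq
end

section
/- (Lemma 2.) Let N > 1 be an integer, M > 1 a real number, and let ω₁, …, ω_k be distinct integers in [−N/2, N/2). Let p₁, …, p_L be pairwise relatively prime positive integers with p_ℓ ≥ M for all ℓ, where L ≥ 1 + (k − 1)·⌊log_M N⌋. Then every frequency is isolated modulo at least one sample length: for each j ∈ {1,…,k} there exists ℓ ∈ {1,…,L} such that ω_j ≢ ω_m (mod p_ℓ) for all m ≠ j. -/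
/-!
If `ω m ≡ ω j` modulo each of a set of pairwise coprime moduli `p ℓ ≥ M`, their product divides
the nonzero difference `ω j - ω m`, whose absolute value is below `N`; so at most `⌊log_M N⌋`
moduli can alias `ω j` with any single `ω m`. The `k - 1` frequencies other than `ω j` thus
alias it modulo at most `(k - 1)⌊log_M N⌋ < L` moduli in total, and some modulus is left over.
-/

open Finset Function Real

theorem Finset.prod_le_abs_of_pairwise_isCoprime_of_dvd {ι : Type*} {s : Finset ι} {p : ι → ℤ}
    {d : ℤ} (hs : (s : Set ι).Pairwise (IsCoprime on p)) (hdvd : ∀ i ∈ s, p i ∣ d)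
    (hd : d ≠ 0) : ∏ i ∈ s, p i ≤ |d| :=
  Int.le_of_dvd (abs_pos.mpr hd) ((Finset.prod_dvd_of_coprime hs hdvd).trans (self_dvd_abs d))

theorem Finset.card_le_floor_logb_of_prod_le {ι : Type*} {s : Finset ι} {p : ι → ℝ} {M x : ℝ}
    (hM : 1 < M) (hp : ∀ i ∈ s, M ≤ p i) (hx : ∏ i ∈ s, p i ≤ x) : #s ≤ ⌊logb M x⌋₊ := by
  have hpow : M ^ #s ≤ x :=
    calc M ^ #s = ∏ _i ∈ s, M := (prod_const M).symm
      _ ≤ ∏ i ∈ s, p i := prod_le_prod (fun _ _ ↦ by positivity) hp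
      _ ≤ x := hx
  apply Nat.le_floor
  rw [le_logb_iff_rpow_le hM (lt_of_lt_of_le (by positivity) hpow), rpow_natCast]
  exact hpow

theorem Finset.card_filter_dvd_le_floor_logb {ι : Type*} {s : Finset ι} {p : ι → ℕ} {M : ℝ}
    (hM : 1 < M) (hcop : (s : Set ι).Pairwise (Nat.Coprime on p)) (hp : ∀ i ∈ s, M ≤ p i)
    {d : ℤ} (hd : d ≠ 0) : #{i ∈ s | (p i : ℤ) ∣ d} ≤ ⌊logb M |d|⌋₊ := by
  have hprod : ∏ i ∈ s with (p i : ℤ) ∣ d, (p i : ℤ) ≤ |d| :=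
    prod_le_abs_of_pairwise_isCoprime_of_dvd
      (fun a ha b hb hab ↦ Nat.isCoprime_iff_coprime.mpr (hcop (filter_subset _ s ha)
        (filter_subset _ s hb) hab))
      (fun i hi ↦ (mem_filter.mp hi).2) hd
  refine card_le_floor_logb_of_prod_le hM (fun i hi ↦ hp i (filter_subset _ s hi)) ?_
  exact_mod_cast hprod

theorem Fintype.exists_forall_ne_not_of_card_filter_le {α β : Type*} [Fintype α] [Fintype β]
    [DecidableEq β] (R : α → β → Prop) [DecidableRel R] (j : β) (F : ℕ)
    (hF : ∀ m ≠ j, #{a | R a m} ≤ F) (hcard : (Fintype.card β - 1) * F < Fintype.card α) :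
    ∃ a, ∀ m ≠ j, ¬ R a m := by
  by_contra! h
  choose f hfj hf using h
  have hmaps : ∀ a ∈ (univ : Finset α), f a ∈ univ.erase j :=
    fun a _ ↦ mem_erase.mpr ⟨hfj a, mem_univ _⟩
  have hfiber : ∀ m ∈ univ.erase j, #{a | f a = m} ≤ F := fun m hm ↦
    (card_le_card fun a ha ↦ by
      simp only [mem_filter, mem_univ, true_and] at ha ⊢
      exact ha ▸ hf a).trans (hF m (ne_of_mem_erase hm))
  have := card_le_mul_card_image_of_maps_to hmaps F hfiber
  rw [card_univ, card_erase_of_mem (mem_univ j), card_univ] at this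
  rw [mul_comm] at hcard
  omega

theorem stmt9_general (N : ℕ) (M : ℝ) (hM : 1 < M)
    (k : ℕ) (ω : Fin k → ℤ) (hω : Function.Injective ω)
    (hrange : ∀ j, -(N : ℤ) ≤ 2 * ω j ∧ 2 * ω j < (N : ℤ))
    (L : ℕ) (p : Fin L → ℕ)
    (hcop : ∀ ℓ ℓ' : Fin L, ℓ ≠ ℓ' → Nat.Coprime (p ℓ) (p ℓ'))
    (hpM : ∀ ℓ, M ≤ (p ℓ : ℝ))
    (hL : 1 + (k - 1) * ⌊Real.logb M (N : ℝ)⌋₊ ≤ L) :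
    ∀ j : Fin k, ∃ ℓ : Fin L, ∀ m : Fin k, m ≠ j → ¬ (ω m ≡ ω j [ZMOD (p ℓ : ℤ)]) := by
  intro j
  refine Fintype.exists_forall_ne_not_of_card_filter_le (fun ℓ m ↦ ω m ≡ ω j [ZMOD (p ℓ : ℤ)])
    j ⌊logb M N⌋₊ (fun m hm ↦ ?_) (by simp only [Fintype.card_fin]; omega)
  have hd : ω j - ω m ≠ 0 := sub_ne_zero.mpr fun h ↦ hm (hω h.symm)
  have hdN : |ω j - ω m| < (N : ℤ) := by
    have := hrange j; have := hrange m
    rw [abs_lt]; constructor <;> omega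
  calc #{ℓ | ω m ≡ ω j [ZMOD (p ℓ : ℤ)]}
      = #{ℓ ∈ univ | (p ℓ : ℤ) ∣ ω j - ω m} := by simp only [Int.modEq_iff_dvd]
    _ ≤ ⌊logb M |((ω j - ω m : ℤ) : ℝ)|⌋₊ :=
      card_filter_dvd_le_floor_logb hM (fun a _ b _ hab ↦ hcop a b hab) (fun ℓ _ ↦ hpM ℓ) hd
    _ ≤ ⌊logb M N⌋₊ := by
      refine Nat.floor_le_floor (logb_le_logb_of_le hM (by exact_mod_cast abs_pos.mpr hd) ?_)
      exact_mod_cast hdN.le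

theorem stmt9 (N : ℕ) (hN : 1 < N) (M : ℝ) (hM : 1 < M)
    (k : ℕ) (ω : Fin k → ℤ) (hω : Function.Injective ω)
    (hrange : ∀ j, -(N : ℤ) ≤ 2 * ω j ∧ 2 * ω j < (N : ℤ))
    (L : ℕ) (p : Fin L → ℕ)
    (hcop : ∀ ℓ ℓ' : Fin L, ℓ ≠ ℓ' → Nat.Coprime (p ℓ) (p ℓ'))
    (hpM : ∀ ℓ, M ≤ (p ℓ : ℝ))
    (hL : 1 + (k - 1) * ⌊Real.logb M (N : ℝ)⌋₊ ≤ L) :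
    ∀ j : Fin k, ∃ ℓ : Fin L, ∀ m : Fin k, m ≠ j → ¬ (ω m ≡ ω j [ZMOD (p ℓ : ℤ)]) :=
  stmt9_general N M hM k ω hω hrange L p hcop hpM hL
end

section
/- Let p > 1 be a real number, let A be the 2×2 real matrix A = [[1 − 2/p, −1/p], [1/p, 1]], and let k ≥ 1 be an integer. Then the matrix geometric sum applied to the first standard basis vector satisfies (∑_{m=0}^{k−1} A^m) · (1, 0)ᵀ = ( k(1 − 1/p)^{k−1}, p(1 − (1 − 1/p)^k) − k(1 − 1/p)^{k−1} )ᵀ. -/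
/-! Both sides, as functions of `k`, vanish at `k = 0` and satisfy the recursion
`s (k + 1) = e₁ + A s k` obeyed by the partial geometric sums `(∑_{m<k} A^m) e₁`;
for the right-hand side this is a direct computation with `q = 1 - 1/p`. -/

open Matrix

theorem Matrix.geom_sum_mulVec_eq_of_succ {ι R : Type*} [Fintype ι] [DecidableEq ι] [Semiring R]
    (A : Matrix ι ι R) (v : ι → R) (f : ℕ → ι → R) (h_zero : f 0 = 0)
    (h_succ : ∀ n, f (n + 1) = v + A *ᵥ f n) (k : ℕ) :
    (∑ m ∈ Finset.range k, A ^ m) *ᵥ v = f k := by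
  induction k with
  | zero => simp [h_zero]
  | succ k ih =>
    rw [geom_sum_succ, add_mulVec, one_mulVec, ← mulVec_mulVec, ih, h_succ, add_comm]

/-- Expected numbers of singly and multiply occupied bins after `k` balls are thrown into
`p` bins. -/
noncomputable def occupancyMean (p : ℝ) (k : ℕ) : Fin 2 → ℝ :=
  ![(k : ℝ) * (1 - 1/p) ^ (k - 1), p * (1 - (1 - 1/p) ^ k) - (k : ℝ) * (1 - 1/p) ^ (k - 1)]

theorem occupancyMean_zero (p : ℝ) : occupancyMean p 0 = 0 := by
  ext i
  fin_cases i <;> simp [occupancyMean]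

theorem occupancyMean_succ {p : ℝ} (hp : p ≠ 0) (n : ℕ) :
    occupancyMean p (n + 1) = ![1, 0] + !![1 - 2/p, -1/p; 1/p, 1] *ᵥ occupancyMean p n := by
  ext i
  cases n <;> fin_cases i <;>
    simp [occupancyMean, pow_succ] <;>
    field_simp <;> ring

theorem stmt15_general (p : ℝ) (hp : 1 < p)
    (A : Matrix (Fin 2) (Fin 2) ℝ) (hA : A = !![1 - 2/p, -1/p; 1/p, 1])
    (k : ℕ) :
    (∑ m ∈ Finset.range k, A ^ m) *ᵥ ![1, 0] =
      ![(k : ℝ) * (1 - 1/p) ^ (k - 1),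
        p * (1 - (1 - 1/p) ^ k) - (k : ℝ) * (1 - 1/p) ^ (k - 1)] := by
  subst hA
  exact geom_sum_mulVec_eq_of_succ _ _ (occupancyMean p) (occupancyMean_zero p)
    (occupancyMean_succ (zero_lt_one.trans hp).ne') k

theorem stmt15 (p : ℝ) (hp : 1 < p)
    (A : Matrix (Fin 2) (Fin 2) ℝ) (hA : A = !![1 - 2/p, -1/p; 1/p, 1])
    (k : ℕ) (hk : 1 ≤ k) :
    (∑ m ∈ Finset.range k, A ^ m) *ᵥ ![1, 0] =
      ![(k : ℝ) * (1 - 1/p) ^ (k - 1),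
        p * (1 - (1 - 1/p) ^ k) - (k : ℝ) * (1 - 1/p) ^ (k - 1)] :=
  stmt15_general p hp A hA k
end
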